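/- For all p, q ∈ ℂ: if L and L′ are complex Lie algebras admitting bases realizing the bracket patterns d₅(p,q,0) and d₅(q,p,0) respectively, then L and L′ are isomorphic as Lie algebras over ℂ. -/

import Mathlib

/-! With `r = 0` the shear `e₂ ↦ e₂ + (p - q) e₃` (a transvection) turns a basis realizing
`d₅(q,p,0)` into one realizing `d₅(p,q,0)`, and two Lie algebras with bases sharing their
structure constants are isomorphic via the linear map matching the bases. -/

/-- `Realizes L c` means that the complex Lie algebra `L` admits a basis `e₁, …, e₅`
(indexed by `Fin 5`) in which the brackets of basis vectors are given by the
structure constants `c`, i.e. `⁅eᵢ, eⱼ⁆ = ∑ₖ c i j k • eₖ` for all `i < j`,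
all brackets of basis vectors being determined by these via antisymmetry. -/
def Realizes (L : Type) [LieRing L] [LieAlgebra ℂ L]
    (c : Fin 5 → Fin 5 → Fin 5 → ℂ) : Prop :=
  ∃ e : Module.Basis (Fin 5) ℂ L, ∀ i j : Fin 5, i < j →
    ⁅e i, e j⁆ = ∑ k, c i j k • e k

/-- The bracket pattern `d₅(p,q,r)` (indices shifted down by one so the basis is indexed by `Fin 5`): `[e₂,e₄]=e₁+p·e₂`, `[e₃,e₄]=e₂+q·e₃`, `[e₁,e₅]=p(q−r)·e₁`, `[e₂,e₅]=(r−q)·e₁`, `[e₃,e₅]=e₁+r·e₂−r(p−q)·e₃`, all other brackets zero. -/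
def d5 (p q r : ℂ) : Fin 5 → Fin 5 → Fin 5 → ℂ := fun i j =>
  if i = 1 ∧ j = 3 then ![1, p, 0, 0, 0]
  else if i = 2 ∧ j = 3 then ![0, 1, q, 0, 0]
  else if i = 0 ∧ j = 4 then ![p * (q - r), 0, 0, 0, 0]
  else if i = 1 ∧ j = 4 then ![r - q, 0, 0, 0, 0]
  else if i = 2 ∧ j = 4 then ![1, r, -(r * (p - q)), 0, 0]
  else 0

section MapLie

variable {R L L' ι : Type*} [CommRing R] [LieRing L] [LieAlgebra R L] [LieRing L']
  [LieAlgebra R L']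

theorem LinearMap.map_lie_of_basis (b : Module.Basis ι R L) (f : L →ₗ[R] L')
    (h : ∀ i j, f ⁅b i, b j⁆ = ⁅f (b i), f (b j)⁆) (x y : L) : f ⁅x, y⁆ = ⁅f x, f y⁆ :=
  LinearMap.congr_fun₂
    (LinearMap.ext_basis (B := (LieAlgebra.ad R L : L →ₗ[R] Module.End R L).compr₂ f)
      (B' := (LieAlgebra.ad R L' : L' →ₗ[R] Module.End R L').compl₁₂ f f) b b h) x y

theorem LinearMap.map_lie_of_basis_of_lt [LinearOrder ι] (b : Module.Basis ι R L)
    (f : L →ₗ[R] L') (h : ∀ i j, i < j → f ⁅b i, b j⁆ = ⁅f (b i), f (b j)⁆) (x y : L) :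
    f ⁅x, y⁆ = ⁅f x, f y⁆ := by
  refine f.map_lie_of_basis b (fun i j => ?_) x y
  rcases lt_trichotomy i j with hij | rfl | hji
  · exact h i j hij
  · simp only [lie_self, map_zero]
  · rw [← lie_skew, map_neg, h j i hji, lie_skew]

end MapLie

theorem Realizes.nonempty_lieEquiv {L L' : Type} [LieRing L] [LieAlgebra ℂ L] [LieRing L']
    [LieAlgebra ℂ L'] {c : Fin 5 → Fin 5 → Fin 5 → ℂ} (hL : Realizes L c)
    (hL' : Realizes L' c) : Nonempty (L ≃ₗ⁅ℂ⁆ L') := by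
  obtain ⟨e, he⟩ := hL
  obtain ⟨f, hf⟩ := hL'
  let T := e.equiv f (Equiv.refl _)
  have hT : ∀ i j, i < j → T ⁅e i, e j⁆ = ⁅T (e i), T (e j)⁆ := fun i j hij => by
    simp [T, he i j hij, hf i j hij, map_sum, map_smul, Module.Basis.equiv_apply]
  exact ⟨.ofBijective { T.toLinearMap with
    map_lie' := T.toLinearMap.map_lie_of_basis_of_lt e hT _ _ } T.bijective⟩

theorem Realizes.d5_swap_of_r_zero {L : Type} [LieRing L] [LieAlgebra ℂ L] {p q : ℂ}
    (hL : Realizes L (d5 q p 0)) : Realizes L (d5 p q 0) := by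
  obtain ⟨f, hf⟩ := hL
  have hshear : ((p - q) • f.coord 1) (f 2) = 0 := by simp
  refine ⟨f.map (LinearEquiv.transvection hshear), fun i j hij => ?_⟩
  simp only [Module.Basis.map_apply, LinearEquiv.transvection.apply]
  -- e.g. `⁅e₂ + (p - q) e₃, e₄⁆ = (e₁ + q e₂) + (p - q) (e₂ + p e₃) = e₁ + p (e₂ + (p - q) e₃)`
  fin_cases i <;> fin_cases j <;> simp [hf, d5, Fin.sum_univ_five] at hij ⊢ <;> module

/-- For all `p, q ∈ ℂ`, Lie algebras realizing the patterns `d₅(p,q,0)`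
and `d₅(q,p,0)` are isomorphic. -/
theorem d5_r_zero_symmetry (p q : ℂ)
    (L L' : Type) [LieRing L] [LieAlgebra ℂ L] [LieRing L'] [LieAlgebra ℂ L']
    (hL : Realizes L (d5 p q 0)) (hL' : Realizes L' (d5 q p 0)) :
    Nonempty (L ≃ₗ⁅ℂ⁆ L') :=
  hL.nonempty_lieEquiv hL'.d5_swap_of_r_zero
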